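/- (Discrete Hardy inequality, first form.) Let α > 0 and 0 < q, h ≤ ∞. There is a constant c = c(α,q,h) such that for every sequence (b_r)_{r∈ℤ} of complex numbers, ( ∑_{k=-∞}^{∞} ( 2^{-αk} ( ∑_{r=-∞}^{k} |b_r|^h )^{1/h} )^q )^{1/q} ≤ c ( ∑_{k=-∞}^{∞} ( 2^{-αk} |b_k| )^q )^{1/q}, with the usual replacement of sums in the exponent-q (resp. exponent-h) position by suprema when q = ∞ (resp. h = ∞). -/

import Mathlib

open ENNReal

/-- The `ℓ_h`-sum `(∑_{r ≤ k} |b_r|^h)^{1/h}`, with the supremum for `h = ∞`. -/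
noncomputable def tailLe (h : ℝ≥0∞) (b : ℤ → ℂ) (k : ℤ) : ℝ≥0∞ :=
  if h = ∞ then ⨆ (r : ℤ) (_ : r ≤ k), ENNReal.ofReal ‖b r‖
  else (∑' r : {r : ℤ // r ≤ k}, (ENNReal.ofReal ‖b r.1‖) ^ h.toReal) ^ (1 / h.toReal)

/-- The weighted `ℓ_q`-norm `(∑_k (2^{-αk} c_k)^q)^{1/q}`, with the supremum for `q = ∞`. -/
noncomputable def wNormNeg (α : ℝ) (q : ℝ≥0∞) (c : ℤ → ℝ≥0∞) : ℝ≥0∞ :=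
  if q = ∞ then ⨆ k : ℤ, (2:ℝ≥0∞) ^ (-(α * (k:ℝ))) * c k
  else (∑' k : ℤ, ((2:ℝ≥0∞) ^ (-(α * (k:ℝ))) * c k) ^ q.toReal) ^ (1 / q.toReal)

/-!
Choose `0 < t ≤ min q h`. Since `ℓ^t ⊆ ℓ^h` contractively, the `ℓ^h` tail sum at `k` is at most
the `ℓ^t` tail sum, and multiplying by the weight `2^{-αk}` shows that `(2^{-αk} ‖b‖_{ℓ^h(≤k)})^t`
is bounded by the convolution of `u_m = (2^{-αm} |b_m|)^t` with the summable kernel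
`j ↦ 2^{-αtj}` on `ℕ`. Since `q/t ≥ 1`, Young's inequality with an `ℓ¹` kernel (Jensen's inequality
for each term, then Fubini) bounds the `ℓ^{q/t}` norm of this convolution by
`C = ∑_j 2^{-αtj}` times that of `u`, which gives the theorem with constant `C^{1/t}`.
-/

namespace ENNReal

theorem rpow_rpow_one_div {t : ℝ} (ht : t ≠ 0) (x : ℝ≥0∞) : (x ^ t) ^ (1 / t) = x := by
  rw [one_div, ENNReal.rpow_rpow_inv ht]

theorem tsum_rpow_le_rpow_tsum {ι : Type*} (f : ι → ℝ≥0∞) {p : ℝ} (hp : 1 ≤ p) :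
    ∑' i, f i ^ p ≤ (∑' i, f i) ^ p := by
  have hp₀ : (0 : ℝ) ≤ p - 1 := by linarith
  have pow_eq : ∀ x : ℝ≥0∞, x ^ p = x * x ^ (p - 1) := fun x => by
    conv_lhs => rw [← add_sub_cancel 1 p, ENNReal.rpow_add_of_nonneg _ _ zero_le_one hp₀,
      ENNReal.rpow_one]
  calc ∑' i, f i ^ p ≤ ∑' i, f i * (∑' i, f i) ^ (p - 1) :=
        ENNReal.tsum_le_tsum fun i => (pow_eq (f i)).trans_le <|
          mul_le_mul_right (ENNReal.rpow_le_rpow (ENNReal.le_tsum i) hp₀) _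
    _ = (∑' i, f i) ^ p := by rw [ENNReal.tsum_mul_right, ← pow_eq]

theorem tsum_rpow_rpow_one_div_le_of_le {ι : Type*} (f : ι → ℝ≥0∞) {s t : ℝ} (ht : 0 < t)
    (hts : t ≤ s) : (∑' i, f i ^ s) ^ (1 / s) ≤ (∑' i, f i ^ t) ^ (1 / t) := by
  have hs : 0 < s := ht.trans_le hts
  have h_pow : ∑' i, f i ^ s ≤ (∑' i, f i ^ t) ^ (s / t) := by
    simpa only [← ENNReal.rpow_mul, mul_div_cancel₀ s ht.ne'] using
      tsum_rpow_le_rpow_tsum (fun i => f i ^ t) ((one_le_div ht).2 hts)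
  calc (∑' i, f i ^ s) ^ (1 / s) ≤ ((∑' i, f i ^ t) ^ (s / t)) ^ (1 / s) := by gcongr
    _ = (∑' i, f i ^ t) ^ (1 / t) := by
        rw [← ENNReal.rpow_mul]
        congr 1
        field_simp

theorem rpow_tsum_mul_le_weight_mul_tsum_rpow {ι : Type*} (w f : ι → ℝ≥0∞) {p : ℝ}
    (hp : 1 ≤ p) : (∑' i, w i * f i) ^ p ≤ (∑' i, w i) ^ (p - 1) * ∑' i, w i * f i ^ p := by
  have hp₀ : 0 < p := one_pos.trans_le hp
  have holder : ∑' i, w i * f i ≤ (∑' i, w i) ^ (1 - p⁻¹) * (∑' i, w i * f i ^ p) ^ p⁻¹ := by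
    have : 0 ≤ 1 - p⁻¹ := sub_nonneg.2 (inv_le_one_of_one_le₀ hp)
    rw [ENNReal.tsum_eq_iSup_sum]
    exact iSup_le fun s => (ENNReal.inner_le_weight_mul_Lp_of_nonneg s hp w f).trans <|
      mul_le_mul' (ENNReal.rpow_le_rpow (ENNReal.sum_le_tsum s) this)
        (ENNReal.rpow_le_rpow (ENNReal.sum_le_tsum s) (by positivity))
  calc (∑' i, w i * f i) ^ p
      ≤ ((∑' i, w i) ^ (1 - p⁻¹) * (∑' i, w i * f i ^ p) ^ p⁻¹) ^ p := by gcongr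
    _ = (∑' i, w i) ^ (p - 1) * ∑' i, w i * f i ^ p := by
        rw [ENNReal.mul_rpow_of_nonneg _ _ hp₀.le, ← ENNReal.rpow_mul, ← ENNReal.rpow_mul,
          sub_mul, one_mul, inv_mul_cancel₀ hp₀.ne', ENNReal.rpow_one]

end ENNReal

theorem tsum_rpow_tsum_mul_sub_le (K : ℕ → ℝ≥0∞) (u : ℤ → ℝ≥0∞) {p : ℝ} (hp : 1 ≤ p) :
    ∑' k : ℤ, (∑' j : ℕ, K j * u (k - j)) ^ p ≤ (∑' j, K j) ^ p * ∑' k, u k ^ p := by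
  set C := ∑' j, K j
  calc ∑' k : ℤ, (∑' j : ℕ, K j * u (k - j)) ^ p
      ≤ ∑' k : ℤ, C ^ (p - 1) * ∑' j : ℕ, K j * u (k - j) ^ p :=
        ENNReal.tsum_le_tsum fun k => ENNReal.rpow_tsum_mul_le_weight_mul_tsum_rpow _ _ hp
    _ = C ^ (p - 1) * ∑' j : ℕ, K j * ∑' k : ℤ, u (k - j) ^ p := by
        simp only [ENNReal.tsum_mul_left]
        rw [ENNReal.tsum_comm]
        simp only [ENNReal.tsum_mul_left]
    _ = C ^ (p - 1) * (C * ∑' k, u k ^ p) := by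
        rw [← ENNReal.tsum_mul_right]
        refine congrArg _ (tsum_congr fun j => congrArg _ ?_)
        exact (Equiv.subRight (j : ℤ)).tsum_eq (fun k => u k ^ p)
    _ = C ^ p * ∑' k, u k ^ p := by
        rw [← mul_assoc]
        congr 1
        conv_rhs => rw [← sub_add_cancel p 1,
          ENNReal.rpow_add_of_nonneg _ _ (sub_nonneg.2 hp) zero_le_one, ENNReal.rpow_one]

noncomputable def lqNorm {ι : Type*} (q : ℝ≥0∞) (f : ι → ℝ≥0∞) : ℝ≥0∞ :=
  if q = ∞ then ⨆ i, f i else (∑' i, f i ^ q.toReal) ^ (1 / q.toReal)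

theorem wNormNeg_eq_lqNorm (α : ℝ) (q : ℝ≥0∞) (c : ℤ → ℝ≥0∞) :
    wNormNeg α q c = lqNorm q (fun k : ℤ => (2 : ℝ≥0∞) ^ (-(α * (k : ℝ))) * c k) := rfl

theorem lqNorm_le_of_rpow_le_conv {q : ℝ≥0∞} {t : ℝ} (ht : 0 < t) (htq : ENNReal.ofReal t ≤ q)
    (K : ℕ → ℝ≥0∞) {F G : ℤ → ℝ≥0∞} (hFG : ∀ k, F k ^ t ≤ ∑' j : ℕ, K j * G (k - j) ^ t) :
    lqNorm q F ≤ (∑' j, K j) ^ (1 / t) * lqNorm q G := by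
  set C := ∑' j, K j
  unfold lqNorm
  split_ifs with hq
  · refine iSup_le fun k => ?_
    calc F k = (F k ^ t) ^ (1 / t) := (ENNReal.rpow_rpow_one_div ht.ne' _).symm
      _ ≤ (∑' j : ℕ, K j * (⨆ i, G i) ^ t) ^ (1 / t) := by
          gcongr
          exact (hFG k).trans <| ENNReal.tsum_le_tsum fun j => by gcongr; exact le_iSup G _
      _ = C ^ (1 / t) * ⨆ i, G i := by
          rw [ENNReal.tsum_mul_right, ENNReal.mul_rpow_of_nonneg _ _ (by positivity),
            ENNReal.rpow_rpow_one_div ht.ne']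
  · have htq' : t ≤ q.toReal := (ENNReal.ofReal_le_iff_le_toReal hq).1 htq
    set p := q.toReal / t
    have hp : 1 ≤ p := (one_le_div ht).2 htq'
    have htp : t * p = q.toReal := mul_div_cancel₀ _ ht.ne'
    have hpow : ∀ x : ℝ≥0∞, x ^ q.toReal = (x ^ t) ^ p := fun x => by
      rw [← ENNReal.rpow_mul, htp]
    have hsum : ∑' k, F k ^ q.toReal ≤ C ^ p * ∑' k, G k ^ q.toReal := by
      simp only [hpow]
      exact (ENNReal.tsum_le_tsum fun k => ENNReal.rpow_le_rpow (hFG k) (by positivity)).trans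
        (tsum_rpow_tsum_mul_sub_le K (fun k => G k ^ t) hp)
    calc (∑' k, F k ^ q.toReal) ^ (1 / q.toReal)
        ≤ (C ^ p * ∑' k, G k ^ q.toReal) ^ (1 / q.toReal) := by gcongr
      _ = C ^ (1 / t) * (∑' k, G k ^ q.toReal) ^ (1 / q.toReal) := by
          rw [ENNReal.mul_rpow_of_nonneg _ _ (by positivity), ← ENNReal.rpow_mul]
          congr 2
          rw [← htp]
          field_simp

def natEquivLe (k : ℤ) : ℕ ≃ {r : ℤ // r ≤ k} where
  toFun j := ⟨k - j, by omega⟩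
  invFun r := (k - r).toNat
  left_inv j := by simp
  right_inv r := Subtype.ext (by have := r.2; simp; omega)

theorem tailLe_le_tsum_rpow {h : ℝ≥0∞} {t : ℝ} (ht : 0 < t) (hth : ENNReal.ofReal t ≤ h)
    (b : ℤ → ℂ) (k : ℤ) :
    tailLe h b k ≤ (∑' j : ℕ, ENNReal.ofReal ‖b (k - j)‖ ^ t) ^ (1 / t) := by
  have reindex : ∑' j : ℕ, ENNReal.ofReal ‖b (k - j)‖ ^ t =
      ∑' r : {r : ℤ // r ≤ k}, ENNReal.ofReal ‖b r‖ ^ t :=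
    (natEquivLe k).tsum_eq (fun r => ENNReal.ofReal ‖b r‖ ^ t)
  rw [reindex]
  unfold tailLe
  split_ifs with hh
  · refine iSup₂_le fun r hr => ?_
    calc ENNReal.ofReal ‖b r‖ = (ENNReal.ofReal ‖b r‖ ^ t) ^ (1 / t) :=
          (ENNReal.rpow_rpow_one_div ht.ne' _).symm
      _ ≤ _ := by
          gcongr
          exact ENNReal.le_tsum (f := fun r : {r : ℤ // r ≤ k} => ENNReal.ofReal ‖b r‖ ^ t) ⟨r, hr⟩
  · exact ENNReal.tsum_rpow_rpow_one_div_le_of_le _ ht ((ENNReal.ofReal_le_iff_le_toReal hh).1 hth)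

theorem rpow_weighted_tailLe_le_conv {α t : ℝ} {h : ℝ≥0∞} (ht : 0 < t)
    (hth : ENNReal.ofReal t ≤ h) (b : ℤ → ℂ) (k : ℤ) :
    ((2 : ℝ≥0∞) ^ (-(α * k)) * tailLe h b k) ^ t ≤
      ∑' j : ℕ, (2 : ℝ≥0∞) ^ (-(α * t * j)) *
        ((2 : ℝ≥0∞) ^ (-(α * ((k - j : ℤ) : ℝ))) * ENNReal.ofReal ‖b (k - j)‖) ^ t := by
  have weight : ∀ j : ℕ, ((2 : ℝ≥0∞) ^ (-(α * k))) ^ t =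
      2 ^ (-(α * t * j)) * ((2 : ℝ≥0∞) ^ (-(α * ((k - j : ℤ) : ℝ)))) ^ t := fun j => by
    rw [← ENNReal.rpow_mul, ← ENNReal.rpow_mul, ← ENNReal.rpow_add _ _ two_ne_zero ofNat_ne_top]
    push_cast
    ring_nf
  calc ((2 : ℝ≥0∞) ^ (-(α * k)) * tailLe h b k) ^ t
      ≤ ((2 : ℝ≥0∞) ^ (-(α * k))) ^ t * ∑' j : ℕ, ENNReal.ofReal ‖b (k - j)‖ ^ t := by
        rw [ENNReal.mul_rpow_of_nonneg _ _ ht.le]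
        gcongr
        calc tailLe h b k ^ t ≤ ((∑' j : ℕ, ENNReal.ofReal ‖b (k - j)‖ ^ t) ^ (1 / t)) ^ t := by
              gcongr
              exact tailLe_le_tsum_rpow ht hth b k
          _ = ∑' j : ℕ, ENNReal.ofReal ‖b (k - j)‖ ^ t := by
              rw [one_div, ENNReal.rpow_inv_rpow ht.ne']
    _ = _ := by
        rw [← ENNReal.tsum_mul_left]
        refine tsum_congr fun j => ?_
        rw [ENNReal.mul_rpow_of_nonneg _ _ ht.le, ← mul_assoc, weight j]

theorem tsum_two_rpow_neg_mul_natCast_ne_top {ε : ℝ} (hε : 0 < ε) :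
    ∑' j : ℕ, (2 : ℝ≥0∞) ^ (-(ε * j)) ≠ ∞ := by
  have geometric : ∀ j : ℕ, (2 : ℝ≥0∞) ^ (-(ε * j)) = (2 ^ (-ε)) ^ j := fun j => by
    rw [← ENNReal.rpow_natCast, ← ENNReal.rpow_mul, neg_mul]
  simp only [geometric]
  exact (tsum_geometric_lt_top.2 <|
    ENNReal.rpow_lt_one_of_one_lt_of_neg one_lt_two (neg_neg_of_pos hε)).ne

/-- discrete Hardy inequality, first form. For `α > 0`,
`0 < q, h ≤ ∞`, there is `c = c(α,q,h)` such that for every sequence `b : ℤ → ℂ`,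
`(∑_k (2^{-αk} (∑_{r ≤ k} |b_r|^h)^{1/h})^q)^{1/q} ≤ c (∑_k (2^{-αk}|b_k|)^q)^{1/q}`,
with sums replaced by suprema when the corresponding exponent is `∞`. -/
theorem discrete_hardy_first (α : ℝ) (q h : ℝ≥0∞) (hα : 0 < α) (hq : 0 < q) (hh : 0 < h) :
    ∃ c : ℝ≥0∞, 0 < c ∧ c < ∞ ∧ ∀ b : ℤ → ℂ,
      wNormNeg α q (fun k => tailLe h b k) ≤
        c * wNormNeg α q (fun k => ENNReal.ofReal ‖b k‖) := by
  obtain ⟨t, -, ht, htqh⟩ := ENNReal.lt_iff_exists_real_btwn.1 (lt_min hq hh)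
  have ht₀ : 0 < t := ENNReal.ofReal_pos.1 ht
  set C := ∑' j : ℕ, (2 : ℝ≥0∞) ^ (-(α * t * j))
  have hC₀ : 0 < C := (ENNReal.le_tsum 0).trans_lt' (by simp)
  have hC : C ≠ ∞ := tsum_two_rpow_neg_mul_natCast_ne_top (mul_pos hα ht₀)
  refine ⟨C ^ (1 / t), ENNReal.rpow_pos hC₀ hC,
    ENNReal.rpow_lt_top_of_nonneg (by positivity) hC, fun b => ?_⟩
  rw [wNormNeg_eq_lqNorm, wNormNeg_eq_lqNorm]
  exact lqNorm_le_of_rpow_le_conv ht₀ (htqh.le.trans (min_le_left _ _)) _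
    fun k => rpow_weighted_tailLe_le_conv (α := α) ht₀ (htqh.le.trans (min_le_right _ _)) b k
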